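/- arXiv:1810.00242 — 2 statements merged into one kernel-verified Lean document; each statement's English description precedes it below -/
import Mathlib

section
/- Let M be a finitely spanned ℝ-tree and let C be the set of endpoints of M. Then: (1) if B ⊆ M spans M, then C ⊆ B; and (2) C spans M. Consequently C is the unique smallest set that spans M. -/
/-!
In an ℝ-tree, `x ∈ [a, b]` exactly when `d(a, x) + d(x, b) = d(a, b)`: the segments `[a, x]` and
`[x, b]` then concatenate to an arc, which must be `[a, b]`. The median of a tripod `p, u, v` then
shows that every point `y` of a segment `[u, v]` lies on `[p, u]` or on `[p, v]`, i.e. can be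
pushed away from `p` to a spanning point. So, seen from `p`, the points `y` with `x ∈ [p, y]` have
a farthest one, found among the finitely many spanning points, and a farthest point is an
endpoint, since any segment through it could be continued further away from `p`. Taking `p = x`
gives an endpoint `c₁`, and then `p = c₁` gives an endpoint `c₂` with `x ∈ [c₁, c₂]`.
-/

open Set Metric

/-- A geodesic segment in a metric space: the image of an isometric embedding of a
closed real interval `[0, ℓ]`, going from `a` to `b`. -/
def IsGeodesicSegmentFromTo {M : Type*} [MetricSpace M] (s : Set M) (a b : M) : Prop :=
  ∃ ℓ : ℝ, 0 ≤ ℓ ∧ ∃ γ : ℝ → M,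
    (∀ u ∈ Set.Icc (0:ℝ) ℓ, ∀ v ∈ Set.Icc (0:ℝ) ℓ, dist (γ u) (γ v) = |u - v|) ∧
    γ 0 = a ∧ γ ℓ = b ∧ s = γ '' Set.Icc 0 ℓ

/-- An arc from `a` to `b`: the (injective, continuous) image of a closed real
interval `[0, ℓ]`; a single point when `a = b`. -/
def IsArcFromTo {M : Type*} [MetricSpace M] (s : Set M) (a b : M) : Prop :=
  ∃ ℓ : ℝ, 0 ≤ ℓ ∧ ∃ γ : ℝ → M,
    ContinuousOn γ (Set.Icc 0 ℓ) ∧ Set.InjOn γ (Set.Icc 0 ℓ) ∧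
    γ 0 = a ∧ γ ℓ = b ∧ s = γ '' Set.Icc 0 ℓ

/-- An ℝ-tree: a metric space in which any two points are joined by a unique arc,
and that arc is a geodesic segment. -/
def IsRTree (M : Type*) [MetricSpace M] : Prop :=
  ∀ a b : M, ∃ s : Set M,
    IsArcFromTo s a b ∧ IsGeodesicSegmentFromTo s a b ∧
    ∀ t : Set M, IsArcFromTo t a b → t = s

/-- The geodesic segment `[a, b]` in an ℝ-tree: the unique arc from `a` to `b`. -/
noncomputable def seg {M : Type*} [MetricSpace M] (h : IsRTree M) (a b : M) : Set M :=
  (h a b).choose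

/-- `B` spans the ℝ-tree `M` if `M` is the union of the segments with endpoints in `B`. -/
def Spans {M : Type*} [MetricSpace M] (h : IsRTree M) (B : Set M) : Prop :=
  ∀ x : M, ∃ b₁ ∈ B, ∃ b₂ ∈ B, x ∈ seg h b₁ b₂

/-- `c` is an endpoint of the ℝ-tree `M`: there do not exist `a, b ∈ M \ {c}`
with `c ∈ [a,b]`. -/
def IsEndpoint {M : Type*} [MetricSpace M] (h : IsRTree M) (c : M) : Prop :=
  ¬ ∃ a b : M, a ≠ c ∧ b ≠ c ∧ c ∈ seg h a b

noncomputable def glue {X : Type*} (f g : ℝ → X) (ℓ : ℝ) (u : ℝ) : X :=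
  if u ≤ ℓ then f u else g (u - ℓ)

lemma glue_of_le {X : Type*} {f g : ℝ → X} {ℓ u : ℝ} (hu : u ≤ ℓ) : glue f g ℓ u = f u :=
  if_pos hu

lemma glue_of_lt {X : Type*} {f g : ℝ → X} {ℓ u : ℝ} (hu : ℓ < u) : glue f g ℓ u = g (u - ℓ) :=
  if_neg (not_le.2 hu)

section Geodesic

variable {M : Type*} [MetricSpace M]

def IsGeodesicOn (γ : ℝ → M) (ℓ : ℝ) : Prop :=
  ∀ u ∈ Icc (0 : ℝ) ℓ, ∀ v ∈ Icc (0 : ℝ) ℓ, dist (γ u) (γ v) = |u - v|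

namespace IsGeodesicOn

variable {γ : ℝ → M} {ℓ u : ℝ}

lemma dist_zero_left (hγ : IsGeodesicOn γ ℓ) (hu : u ∈ Icc 0 ℓ) : dist (γ 0) (γ u) = u := by
  rw [hγ 0 ⟨le_rfl, hu.1.trans hu.2⟩ u hu, zero_sub, abs_neg, abs_of_nonneg hu.1]

lemma dist_end (hγ : IsGeodesicOn γ ℓ) (hu : u ∈ Icc 0 ℓ) : dist (γ u) (γ ℓ) = ℓ - u := by
  rw [hγ u hu ℓ ⟨hu.1.trans hu.2, le_rfl⟩, abs_sub_comm, abs_of_nonneg (sub_nonneg.2 hu.2)]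

lemma mono (hγ : IsGeodesicOn γ ℓ) {ℓ' : ℝ} (hℓ' : ℓ' ≤ ℓ) : IsGeodesicOn γ ℓ' :=
  fun u hu v hv => hγ u ⟨hu.1, hu.2.trans hℓ'⟩ v ⟨hv.1, hv.2.trans hℓ'⟩

lemma reverse (hγ : IsGeodesicOn γ ℓ) : IsGeodesicOn (fun s => γ (ℓ - s)) ℓ := by
  intro u hu v hv
  rw [hγ _ ⟨by linarith [hu.2], by linarith [hu.1]⟩ _ ⟨by linarith [hv.2], by linarith [hv.1]⟩,
    show ℓ - u - (ℓ - v) = v - u by ring, abs_sub_comm]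

lemma shift (hγ : IsGeodesicOn γ ℓ) {τ : ℝ} (hτ : 0 ≤ τ) :
    IsGeodesicOn (fun s => γ (s + τ)) (ℓ - τ) := by
  intro u hu v hv
  rw [hγ _ ⟨by linarith [hu.1], by linarith [hu.2]⟩ _ ⟨by linarith [hv.1], by linarith [hv.2]⟩,
    add_sub_add_right_eq_sub]

lemma injOn (hγ : IsGeodesicOn γ ℓ) : InjOn γ (Icc 0 ℓ) := fun u hu v hv huv => by
  have := hγ u hu v hv
  rw [huv, dist_self, eq_comm, abs_eq_zero, sub_eq_zero] at this
  exact this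

lemma continuousOn (hγ : IsGeodesicOn γ ℓ) : ContinuousOn γ (Icc 0 ℓ) :=
  (LipschitzOnWith.of_dist_le_mul (K := 1) fun u hu v hv => by
    rw [hγ u hu v hv, NNReal.coe_one, one_mul, Real.dist_eq]).continuousOn

lemma exists_isGreatest_eq {γ' : ℝ → M} {ℓ' : ℝ} (hγ : IsGeodesicOn γ ℓ)
    (hγ' : IsGeodesicOn γ' ℓ') (h0 : γ 0 = γ' 0) (hℓ : 0 ≤ ℓ) (hℓ' : 0 ≤ ℓ') :
    ∃ τ, IsGreatest {t ∈ Icc 0 (min ℓ ℓ') | γ t = γ' t} τ := by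
  have hcont : ContinuousOn (fun t => (γ t, γ' t)) (Icc 0 (min ℓ ℓ')) :=
    ((hγ.mono (min_le_left _ _)).continuousOn).prodMk ((hγ'.mono (min_le_right _ _)).continuousOn)
  have hclosed := hcont.preimage_isClosed_of_isClosed isClosed_Icc isClosed_diagonal
  exact (isCompact_Icc.of_isClosed_subset hclosed inter_subset_left).exists_isGreatest
    ⟨0, ⟨le_rfl, le_min hℓ hℓ'⟩, h0⟩

end IsGeodesicOn

section Glue

variable {f g : ℝ → M} {ℓ₁ ℓ₂ : ℝ}

lemma dist_glue_le (hf : IsGeodesicOn f ℓ₁) (hg : IsGeodesicOn g ℓ₂) (hfg : f ℓ₁ = g 0)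
    {u v : ℝ} (hu : u ∈ Icc 0 (ℓ₁ + ℓ₂)) (hv : v ∈ Icc 0 (ℓ₁ + ℓ₂)) (huv : u ≤ v) :
    dist (glue f g ℓ₁ u) (glue f g ℓ₁ v) ≤ v - u := by
  rcases le_or_gt v ℓ₁ with hv₁ | hv₁
  · rw [glue_of_le (huv.trans hv₁), glue_of_le hv₁, hf u ⟨hu.1, huv.trans hv₁⟩ v ⟨hv.1, hv₁⟩,
      abs_sub_comm, abs_of_nonneg (sub_nonneg.2 huv)]
  have hv' : v - ℓ₁ ∈ Icc 0 ℓ₂ := ⟨by linarith, by linarith [hv.2]⟩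
  rcases le_or_gt u ℓ₁ with hu₁ | hu₁
  · rw [glue_of_le hu₁, glue_of_lt hv₁]
    calc dist (f u) (g (v - ℓ₁)) ≤ dist (f u) (f ℓ₁) + dist (g 0) (g (v - ℓ₁)) :=
          hfg ▸ dist_triangle _ _ _
      _ = v - u := by rw [hf.dist_end ⟨hu.1, hu₁⟩, hg.dist_zero_left hv']; ring
  · rw [glue_of_lt hu₁, glue_of_lt hv₁,
      hg _ ⟨by linarith, by linarith [hu.2]⟩ _ hv', abs_sub_comm, abs_of_nonneg (by linarith)]
    linarith

lemma continuousOn_glue (hf : IsGeodesicOn f ℓ₁) (hg : IsGeodesicOn g ℓ₂) (hfg : f ℓ₁ = g 0) :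
    ContinuousOn (glue f g ℓ₁) (Icc 0 (ℓ₁ + ℓ₂)) := by
  refine (LipschitzOnWith.of_dist_le_mul (K := 1) fun u hu v hv => ?_).continuousOn
  rw [NNReal.coe_one, one_mul, Real.dist_eq]
  rcases le_total u v with huv | hvu
  · exact (dist_glue_le hf hg hfg hu hv huv).trans (abs_sub_comm u v ▸ le_abs_self _)
  · exact dist_comm (glue f g ℓ₁ u) _ ▸ (dist_glue_le hf hg hfg hv hu hvu).trans (le_abs_self _)

lemma injOn_glue (hf : IsGeodesicOn f ℓ₁) (hg : IsGeodesicOn g ℓ₂)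
    (hover : ∀ s ∈ Icc 0 ℓ₁, ∀ t ∈ Icc 0 ℓ₂, f s = g t → s = ℓ₁ ∧ t = 0) :
    InjOn (glue f g ℓ₁) (Icc 0 (ℓ₁ + ℓ₂)) := by
  intro u hu v hv huv
  have mem₂ : ∀ w ∈ Icc 0 (ℓ₁ + ℓ₂), ℓ₁ < w → w - ℓ₁ ∈ Icc 0 ℓ₂ :=
    fun w hw hw₁ => ⟨by linarith, by linarith [hw.2]⟩
  rcases le_or_gt u ℓ₁ with hu₁ | hu₁ <;> rcases le_or_gt v ℓ₁ with hv₁ | hv₁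
  · rw [glue_of_le hu₁, glue_of_le hv₁] at huv
    exact hf.injOn ⟨hu.1, hu₁⟩ ⟨hv.1, hv₁⟩ huv
  · rw [glue_of_le hu₁, glue_of_lt hv₁] at huv
    linarith [hover u ⟨hu.1, hu₁⟩ _ (mem₂ v hv hv₁) huv]
  · rw [glue_of_lt hu₁, glue_of_le hv₁] at huv
    linarith [hover v ⟨hv.1, hv₁⟩ _ (mem₂ u hu hu₁) huv.symm]
  · rw [glue_of_lt hu₁, glue_of_lt hv₁] at huv
    linarith [hg.injOn (mem₂ u hu hu₁) (mem₂ v hv hv₁) huv]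

lemma isArcFromTo_glue (hf : IsGeodesicOn f ℓ₁) (hg : IsGeodesicOn g ℓ₂) (hℓ₁ : 0 ≤ ℓ₁)
    (hℓ₂ : 0 ≤ ℓ₂) (hfg : f ℓ₁ = g 0)
    (hover : ∀ s ∈ Icc 0 ℓ₁, ∀ t ∈ Icc 0 ℓ₂, f s = g t → s = ℓ₁ ∧ t = 0) :
    IsArcFromTo (glue f g ℓ₁ '' Icc 0 (ℓ₁ + ℓ₂)) (f 0) (g ℓ₂) := by
  refine ⟨ℓ₁ + ℓ₂, by linarith, glue f g ℓ₁, continuousOn_glue hf hg hfg, injOn_glue hf hg hover,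
    glue_of_le hℓ₁, ?_, rfl⟩
  rcases hℓ₂.eq_or_lt with rfl | hℓ₂
  · rw [add_zero, glue_of_le le_rfl, hfg]
  · rw [glue_of_lt (by linarith), add_sub_cancel_left]

end Glue

end Geodesic

section RTree

variable {M : Type*} [MetricSpace M] (h : IsRTree M)

lemma eq_seg_of_isArcFromTo {a b : M} {t : Set M} (ht : IsArcFromTo t a b) : t = seg h a b :=
  (h a b).choose_spec.2.2 t ht

lemma exists_isGeodesicOn_seg (a b : M) :
    ∃ γ : ℝ → M, IsGeodesicOn γ (dist a b) ∧ γ 0 = a ∧ γ (dist a b) = b ∧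
      seg h a b = γ '' Icc 0 (dist a b) := by
  obtain ⟨ℓ, hℓ, γ, hγ, h0, h1, him⟩ := (h a b).choose_spec.2.1
  have hγ : IsGeodesicOn γ ℓ := hγ
  obtain rfl : ℓ = dist a b := by rw [← h0, ← h1, hγ.dist_zero_left ⟨hℓ, le_rfl⟩]
  exact ⟨γ, hγ, h0, h1, him⟩

lemma mem_seg_of_glue {f g : ℝ → M} {ℓ₁ ℓ₂ : ℝ} (hf : IsGeodesicOn f ℓ₁)
    (hg : IsGeodesicOn g ℓ₂) (hℓ₁ : 0 ≤ ℓ₁) (hℓ₂ : 0 ≤ ℓ₂) (hfg : f ℓ₁ = g 0)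
    (hover : ∀ s ∈ Icc 0 ℓ₁, ∀ t ∈ Icc 0 ℓ₂, f s = g t → s = ℓ₁ ∧ t = 0) :
    f ℓ₁ ∈ seg h (f 0) (g ℓ₂) := by
  rw [← eq_seg_of_isArcFromTo h (isArcFromTo_glue hf hg hℓ₁ hℓ₂ hfg hover)]
  exact ⟨ℓ₁, ⟨hℓ₁, by linarith⟩, glue_of_le le_rfl⟩

lemma dist_add_dist_of_mem_seg {a b x : M} (hx : x ∈ seg h a b) :
    dist a x + dist x b = dist a b := by
  obtain ⟨γ, hγ, h0, h1, him⟩ := exists_isGeodesicOn_seg h a b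
  rw [him] at hx
  obtain ⟨u, hu, rfl⟩ := hx
  have hxa := hγ.dist_zero_left hu
  have hxb := hγ.dist_end hu
  rw [h0] at hxa
  rw [h1] at hxb
  linarith

lemma mem_seg_of_dist_add_dist {a b x : M} (hx : dist a x + dist x b = dist a b) :
    x ∈ seg h a b := by
  obtain ⟨f, hf, hf0, hf1, -⟩ := exists_isGeodesicOn_seg h a x
  obtain ⟨g, hg, hg0, hg1, -⟩ := exists_isGeodesicOn_seg h x b
  have hmem := mem_seg_of_glue h hf hg dist_nonneg dist_nonneg (hf1.trans hg0.symm) ?_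
  · rwa [hf0, hf1, hg1] at hmem
  intro s hs t ht hst
  have := dist_triangle a (f s) b
  rw [← hf0, hf.dist_zero_left hs, hst, ← hg1, hg.dist_end ht, hg1, hf0] at this
  constructor <;> linarith [hs.2, ht.1]

lemma mem_seg_iff {a b x : M} : x ∈ seg h a b ↔ dist a x + dist x b = dist a b :=
  ⟨dist_add_dist_of_mem_seg h, mem_seg_of_dist_add_dist h⟩

lemma seg_subset_seg {p y e : M} (hy : y ∈ seg h p e) : seg h p y ⊆ seg h p e := by
  intro x hx
  rw [mem_seg_iff] at *
  linarith [dist_triangle x y e, dist_triangle p x e]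

lemma dist_eq_abs_sub_of_mem_seg {a b p q : M} (hp : p ∈ seg h a b) (hq : q ∈ seg h a b) :
    dist p q = |dist a p - dist a q| := by
  obtain ⟨γ, hγ, h0, -, him⟩ := exists_isGeodesicOn_seg h a b
  rw [him] at hp hq
  obtain ⟨u, hu, rfl⟩ := hp
  obtain ⟨v, hv, rfl⟩ := hq
  rw [← h0, hγ.dist_zero_left hu, hγ.dist_zero_left hv, hγ u hu v hv]

/-- The median is the point where the geodesics from `x` to `u` and to `v` part. -/
lemma exists_median (x u v : M) : ∃ m, m ∈ seg h x u ∧ m ∈ seg h x v ∧ m ∈ seg h u v := by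
  obtain ⟨γ₁, hγ₁, h10, h11, h1im⟩ := exists_isGeodesicOn_seg h x u
  obtain ⟨γ₂, hγ₂, h20, h21, h2im⟩ := exists_isGeodesicOn_seg h x v
  set a := dist x u
  set b := dist x v
  obtain ⟨τ, ⟨⟨hτ0, hτab⟩, hτ⟩, hτmax⟩ :=
    hγ₁.exists_isGreatest_eq hγ₂ (h10.trans h20.symm) dist_nonneg dist_nonneg
  have hτa : τ ≤ a := hτab.trans (min_le_left _ _)
  have hτb : τ ≤ b := hτab.trans (min_le_right _ _)
  refine ⟨γ₁ τ, h1im ▸ ⟨τ, ⟨hτ0, hτa⟩, rfl⟩, h2im ▸ hτ ▸ ⟨τ, ⟨hτ0, hτb⟩, rfl⟩, ?_⟩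
  have hmem := mem_seg_of_glue h ((hγ₁.reverse).mono (show a - τ ≤ a by linarith))
    (hγ₂.shift hτ0) (by linarith) (by linarith) (by simp [hτ]) ?_
  · simpa [h11, h21] using hmem
  -- a common point of the two branches is `γ₁ r = γ₂ r` with `r ≥ τ`, so `r = τ` by maximality
  intro s hs t ht hst
  have hs' : a - s ∈ Icc 0 a := ⟨by linarith [hs.2], by linarith [hs.1]⟩
  have ht' : t + τ ∈ Icc 0 b := ⟨by linarith [ht.1], by linarith [ht.2]⟩
  have heq : a - s = t + τ := by
    rw [← hγ₁.dist_zero_left hs', ← hγ₂.dist_zero_left ht', h10, h20]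
    exact congrArg (dist x) hst
  have hle := hτmax ⟨⟨hs'.1, le_min hs'.2 (heq ▸ ht'.2)⟩, heq ▸ hst⟩
  constructor <;> linarith [hs.2, ht.1]

lemma exists_mem_seg_of_mem_seg (p : M) {u v y : M} (hy : y ∈ seg h u v) :
    ∃ e, (e = u ∨ e = v) ∧ y ∈ seg h p e := by
  obtain ⟨m, hmu, hmv, hmuv⟩ := exists_median h p u v
  have hmy := dist_eq_abs_sub_of_mem_seg h hmuv hy
  rw [mem_seg_iff h] at hmu hmv hmuv hy
  rcases le_total (dist u m) (dist u y) with hle | hle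
  · refine ⟨v, Or.inr rfl, (mem_seg_iff h).2 ?_⟩
    rw [abs_of_nonpos (sub_nonpos.2 hle)] at hmy
    linarith [dist_triangle p m y, dist_triangle p y v]
  · refine ⟨u, Or.inl rfl, (mem_seg_iff h).2 ?_⟩
    rw [abs_of_nonneg (sub_nonneg.2 hle)] at hmy
    linarith [dist_triangle p m y, dist_triangle p y u, dist_comm u m, dist_comm u y]

lemma IsEndpoint.mem_of_spans {B : Set M} (hB : Spans h B) {c : M} (hc : IsEndpoint h c) :
    c ∈ B := by
  obtain ⟨b₁, hb₁, b₂, hb₂, hcb⟩ := hB c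
  by_contra hcB
  exact hc ⟨b₁, b₂, ne_of_mem_of_not_mem hb₁ hcB, ne_of_mem_of_not_mem hb₂ hcB, hcb⟩

lemma exists_forall_dist_le_of_spans {B : Set M} (hfin : B.Finite) (hspan : Spans h B)
    (p x : M) : ∃ c, x ∈ seg h p c ∧ ∀ y, x ∈ seg h p y → dist p y ≤ dist p c := by
  have beyond : ∀ y, x ∈ seg h p y → ∃ e ∈ {b ∈ B | x ∈ seg h p b}, dist p y ≤ dist p e := by
    intro y hy
    obtain ⟨b₁, hb₁, b₂, hb₂, hyb⟩ := hspan y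
    obtain ⟨e, he, hye⟩ := exists_mem_seg_of_mem_seg h p hyb
    have heB : e ∈ B := by rcases he with rfl | rfl <;> assumption
    refine ⟨e, ⟨heB, seg_subset_seg h hye hy⟩, ?_⟩
    linarith [dist_add_dist_of_mem_seg h hye, dist_nonneg (x := y) (y := e)]
  obtain ⟨e₀, he₀, -⟩ := beyond x ((mem_seg_iff h).2 (by simp))
  obtain ⟨c, ⟨-, hxc⟩, hc⟩ := exists_max_image _ (dist p) (hfin.subset (sep_subset _ _)) ⟨e₀, he₀⟩
  refine ⟨c, hxc, fun y hy => ?_⟩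
  obtain ⟨e, he, hye⟩ := beyond y hy
  exact hye.trans (hc e he)

lemma isEndpoint_of_forall_dist_le {p x c : M} (hxc : x ∈ seg h p c)
    (hc : ∀ y, x ∈ seg h p y → dist p y ≤ dist p c) : IsEndpoint h c := by
  rintro ⟨a, b, ha, hb, hcab⟩
  obtain ⟨e, he, hce⟩ := exists_mem_seg_of_mem_seg h p hcab
  have hec : e ≠ c := by rcases he with rfl | rfl <;> assumption
  have hle := hc e (seg_subset_seg h hce hxc)
  rw [mem_seg_iff h] at hce
  exact hec (dist_le_zero.1 (by linarith)).symm

lemma spans_isEndpoint {B : Set M} (hfin : B.Finite) (hspan : Spans h B) :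
    Spans h {c : M | IsEndpoint h c} := by
  intro x
  obtain ⟨c₁, -, hc₁⟩ := exists_forall_dist_le_of_spans h hfin hspan x x
  obtain ⟨c₂, hxc₂, hc₂⟩ := exists_forall_dist_le_of_spans h hfin hspan c₁ x
  exact ⟨c₁, isEndpoint_of_forall_dist_le h ((mem_seg_iff h).2 (by simp)) hc₁,
    c₂, isEndpoint_of_forall_dist_le h hxc₂ hc₂, hxc₂⟩

end RTree

/-- In a finitely spanned ℝ-tree, the set `C` of endpoints is
contained in every spanning set and itself spans; hence it is the unique smallest
spanning set. -/
theorem statement_1 {M : Type*} [MetricSpace M] (h : IsRTree M)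
    (hfin : ∃ B : Set M, B.Finite ∧ Spans h B) :
    (∀ B : Set M, Spans h B → {c : M | IsEndpoint h c} ⊆ B) ∧
      Spans h {c : M | IsEndpoint h c} := by
  obtain ⟨B, hBfin, hBspan⟩ := hfin
  exact ⟨fun B' hB' _ hc => IsEndpoint.mem_of_spans h hB' hc, spans_isEndpoint h hBfin hBspan⟩
end

section
/- Let M be an ℝ-tree, let s ∈ [0,1], and for x₁, x₂ ∈ M let ν_s(x₁,x₂) denote the unique point of the segment [x₁,x₂] at distance s·d(x₁,x₂) from x₁ and distance (1−s)·d(x₁,x₂) from x₂. Then for all x₁, x₂, y ∈ M: d(ν_s(x₁,x₂), y) = max{ d(x₁,y) − s·d(x₁,x₂), d(x₂,y) − (1−s)·d(x₁,x₂), 0 } (that is, the maximum of the two truncated subtractions). -/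
/-!
Let `p` be the last point of `[ν, y]` that lies on `[x₁, x₂]`. The part of `[ν, y]` after `p`
meets `[x₁, x₂]` only in `p`, so gluing it to `[x₁, p]` or to `[p, x₂]` gives an arc, which by
uniqueness of arcs is `[x₁, y]`, resp. `[x₂, y]`. Hence `p` lies on `[ν, y]`, `[x₁, y]` and
`[x₂, y]`, each of the three distances to `y` is a distance along `[x₁, x₂]` plus `d(p, y)`,
and the formula reduces to `|s·d(x₁,x₂) − d(x₁,p)| + d(p,y)`.
-/

open Set Metric

lemma ContinuousOn.exists_last_mem {X : Type*} [TopologicalSpace X] {f : ℝ → X} {a b : ℝ}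
    {K : Set X} (hf : ContinuousOn f (Icc a b)) (hK : IsClosed K) (hab : a ≤ b)
    (ha : f a ∈ K) : ∃ t₀ ∈ Icc a b, f t₀ ∈ K ∧ ∀ t ∈ Icc t₀ b, f t ∈ K → t = t₀ := by
  have hT : IsCompact (Icc a b ∩ f ⁻¹' K) :=
    isCompact_Icc.of_isClosed_subset (hf.preimage_isClosed_of_isClosed isClosed_Icc hK)
      inter_subset_left
  obtain ⟨t₀, ⟨ht₀, hft₀⟩, hmax⟩ := hT.exists_isGreatest ⟨a, left_mem_Icc.2 hab, ha⟩
  exact ⟨t₀, ht₀, hft₀, fun t ht hft => le_antisymm (hmax ⟨⟨ht₀.1.trans ht.1, ht.2⟩, hft⟩) ht.1⟩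

section Arcs

variable {M : Type*} [MetricSpace M]

lemma IsArcFromTo.left_mem {s : Set M} {a b : M} (h : IsArcFromTo s a b) : a ∈ s := by
  obtain ⟨ℓ, hℓ, γ, -, -, rfl, -, rfl⟩ := h
  exact mem_image_of_mem γ ⟨le_rfl, hℓ⟩

lemma isArcFromTo_image_Icc {γ : ℝ → M} {c e : ℝ} (hce : c ≤ e)
    (hc : ContinuousOn γ (Icc c e)) (hi : InjOn γ (Icc c e)) :
    IsArcFromTo (γ '' Icc c e) (γ c) (γ e) := by
  have hmaps : MapsTo (· + c) (Icc 0 (e - c)) (Icc c e) :=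
    fun t ht => ⟨by linarith [ht.1], by linarith [ht.2]⟩
  refine ⟨e - c, sub_nonneg.2 hce, γ ∘ (· + c),
    hc.comp (continuousOn_id.add continuousOn_const) hmaps,
    hi.comp (add_left_injective c).injOn hmaps, by simp, by simp, ?_⟩
  rw [image_comp, image_add_const_Icc]
  simp

lemma IsArcFromTo.exists_Icc {s : Set M} {a b : M} (h : IsArcFromTo s a b) (c : ℝ) :
    ∃ e, c ≤ e ∧ ∃ γ : ℝ → M, ContinuousOn γ (Icc c e) ∧ InjOn γ (Icc c e) ∧
      γ c = a ∧ γ e = b ∧ s = γ '' Icc c e := by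
  obtain ⟨ℓ, hℓ, γ, hc, hi, rfl, rfl, rfl⟩ := h
  have hmaps : MapsTo (· - c) (Icc c (ℓ + c)) (Icc 0 ℓ) :=
    fun t ht => ⟨by linarith [ht.1], by linarith [ht.2]⟩
  refine ⟨ℓ + c, by linarith, γ ∘ (· - c),
    hc.comp (continuousOn_id.sub continuousOn_const) hmaps,
    hi.comp (sub_left_injective).injOn hmaps, by simp, by simp, ?_⟩
  rw [image_comp, image_sub_const_Icc]
  simp

lemma IsArcFromTo.symm {s : Set M} {a b : M} (h : IsArcFromTo s a b) : IsArcFromTo s b a := by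
  obtain ⟨ℓ, hℓ, γ, hc, hi, rfl, rfl, rfl⟩ := h
  have hmaps : MapsTo Neg.neg (Icc (-ℓ) 0) (Icc 0 ℓ) :=
    fun t ht => ⟨by linarith [ht.2], by linarith [ht.1]⟩
  have h' := isArcFromTo_image_Icc (neg_nonpos.2 hℓ)
    (hc.comp continuousOn_neg hmaps) (hi.comp neg_injective.injOn hmaps)
  rwa [image_comp, image_neg_Icc, neg_zero, neg_neg, Function.comp_apply, Function.comp_apply,
    neg_zero, neg_neg] at h'

lemma IsArcFromTo.union {A B : Set M} {a p b : M} (hA : IsArcFromTo A a p)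
    (hB : IsArcFromTo B p b) (hAB : A ∩ B ⊆ {p}) : IsArcFromTo (A ∪ B) a b := by
  obtain ⟨ℓ, hℓ, γ₁, hc₁, hi₁, rfl, rfl, rfl⟩ := hA
  obtain ⟨e, hℓe, γ₂, hc₂, hi₂, hγ₂ℓ, rfl, rfl⟩ := hB.exists_Icc ℓ
  let φ : ℝ → M := fun t => if t ≤ ℓ then γ₁ t else γ₂ t
  have hφ₁ : EqOn φ γ₁ (Icc 0 ℓ) := fun t ht => if_pos ht.2
  have hφ₂ : EqOn φ γ₂ (Icc ℓ e) := by
    intro t ht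
    rcases ht.1.eq_or_lt with rfl | hlt
    · simp [φ, hγ₂ℓ]
    · exact if_neg hlt.not_ge
  have hcont : ContinuousOn φ (Icc 0 e) := by
    rw [← Icc_union_Icc_eq_Icc hℓ hℓe]
    exact (hc₁.congr hφ₁).union_of_isClosed (hc₂.congr hφ₂) isClosed_Icc isClosed_Icc
  have hinj : InjOn φ (Icc 0 e) := by
    rw [← Icc_union_Ioc_eq_Icc hℓ hℓe]
    have hφ₂' := hφ₂.mono Ioc_subset_Icc_self
    refine (injOn_union (disjoint_left.2 fun t h₁ h₂ => h₂.1.not_ge h₁.2)).2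
      ⟨hi₁.congr hφ₁.symm, (hi₂.mono Ioc_subset_Icc_self).congr hφ₂'.symm, ?_⟩
    intro u hu v hv huv
    rw [hφ₁ hu, hφ₂' hv] at huv
    have hv_eq : γ₂ v = γ₂ ℓ :=
      hγ₂ℓ ▸ hAB ⟨huv ▸ mem_image_of_mem γ₁ hu, mem_image_of_mem γ₂ (Ioc_subset_Icc_self hv)⟩
    exact hv.1.ne' (hi₂ (Ioc_subset_Icc_self hv) ⟨le_rfl, hℓe⟩ hv_eq)
  convert isArcFromTo_image_Icc (hℓ.trans hℓe) hcont hinj using 1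
  · rw [← Icc_union_Icc_eq_Icc hℓ hℓe, image_union, hφ₁.image_eq, hφ₂.image_eq]
  · exact (hφ₁ ⟨le_rfl, hℓ⟩).symm
  · exact (hφ₂ ⟨hℓe, le_rfl⟩).symm

end Arcs

def IsometricOn {M : Type*} [MetricSpace M] (γ : ℝ → M) (I : Set ℝ) : Prop :=
  ∀ u ∈ I, ∀ v ∈ I, dist (γ u) (γ v) = |u - v|

namespace IsometricOn

variable {M : Type*} [MetricSpace M] {γ : ℝ → M} {I J : Set ℝ}

lemma mono (h : IsometricOn γ I) (hJ : J ⊆ I) : IsometricOn γ J :=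
  fun u hu v hv => h u (hJ hu) v (hJ hv)

lemma continuousOn (h : IsometricOn γ I) : ContinuousOn γ I :=
  (LipschitzOnWith.of_dist_le_mul (K := 1) fun u hu v hv => by
    simp [h u hu v hv, Real.dist_eq]).continuousOn

lemma injOn (h : IsometricOn γ I) : InjOn γ I := fun u hu v hv huv => by
  simpa [huv, sub_eq_zero, eq_comm] using h u hu v hv

lemma isArcFromTo_image_Icc (h : IsometricOn γ I) {c e : ℝ} (hce : c ≤ e) (hI : Icc c e ⊆ I) :
    IsArcFromTo (γ '' Icc c e) (γ c) (γ e) :=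
  _root_.isArcFromTo_image_Icc hce (h.mono hI).continuousOn (h.mono hI).injOn

end IsometricOn

namespace IsRTree

variable {M : Type*} [MetricSpace M] (h : IsRTree M)

lemma eq_seg_of_isArcFromTo {t : Set M} {a b : M} (ht : IsArcFromTo t a b) : t = seg h a b :=
  (h a b).choose_spec.2.2 t ht

lemma exists_isometricOn_seg (a b : M) :
    ∃ γ : ℝ → M, IsometricOn γ (Icc 0 (dist a b)) ∧ γ 0 = a ∧ γ (dist a b) = b ∧
      seg h a b = γ '' Icc 0 (dist a b) := by
  obtain ⟨ℓ, hℓ, γ, hγ, ha, hb, hseg⟩ := (h a b).choose_spec.2.1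
  have hℓ_eq : dist a b = ℓ := by
    rw [← ha, ← hb, hγ 0 ⟨le_rfl, hℓ⟩ ℓ ⟨hℓ, le_rfl⟩, zero_sub, abs_neg, abs_of_nonneg hℓ]
  exact hℓ_eq ▸ ⟨γ, hγ, ha, hb, hseg⟩

lemma isCompact_seg (a b : M) : IsCompact (seg h a b) := by
  obtain ⟨γ, hγ, -, -, hseg⟩ := h.exists_isometricOn_seg a b
  rw [hseg]
  exact isCompact_Icc.image_of_continuousOn hγ.continuousOn

lemma dist_eq_abs_sub_of_mem_seg {a b p q : M} (hp : p ∈ seg h a b) (hq : q ∈ seg h a b) :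
    dist p q = |dist a p - dist a q| := by
  obtain ⟨γ, hγ, rfl, -, hseg⟩ := h.exists_isometricOn_seg a b
  rw [hseg] at hp hq
  obtain ⟨u, hu, rfl⟩ := hp
  obtain ⟨v, hv, rfl⟩ := hq
  rw [hγ u hu v hv, hγ 0 ⟨le_rfl, dist_nonneg⟩ u hu, hγ 0 ⟨le_rfl, dist_nonneg⟩ v hv]
  simp [abs_of_nonneg hu.1, abs_of_nonneg hv.1]

lemma dist_add_dist_of_mem_seg {a b p : M} (hp : p ∈ seg h a b) :
    dist a p + dist p b = dist a b := by
  obtain ⟨γ, hγ, rfl, hb, hseg⟩ := h.exists_isometricOn_seg a b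
  rw [hseg] at hp
  obtain ⟨u, hu, rfl⟩ := hp
  have hu_end := hγ u hu _ ⟨dist_nonneg, le_rfl⟩
  rw [hb] at hu_end
  rw [hγ 0 ⟨le_rfl, dist_nonneg⟩ u hu, hu_end, abs_of_nonpos (by linarith [hu.1]),
    abs_of_nonpos (by linarith [hu.2])]
  ring

lemma mem_seg_of_isArcFromTo {A B : Set M} {a p b : M} (hA : IsArcFromTo A a p)
    (hB : IsArcFromTo B p b) (hAB : A ∩ B ⊆ {p}) : p ∈ seg h a b :=
  h.eq_seg_of_isArcFromTo (hA.union hB hAB) ▸ Or.inr hB.left_mem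

lemma exists_gate {x₁ x₂ ν : M} (hν : ν ∈ seg h x₁ x₂) (y : M) :
    ∃ p ∈ seg h x₁ x₂, p ∈ seg h ν y ∧ p ∈ seg h x₁ y ∧ p ∈ seg h x₂ y := by
  obtain ⟨δ, hδ, hδν, hδy, hseg_νy⟩ := h.exists_isometricOn_seg ν y
  obtain ⟨t₀, ht₀, hpK, hlast⟩ := hδ.continuousOn.exists_last_mem
    (h.isCompact_seg x₁ x₂).isClosed dist_nonneg (hδν ▸ hν)
  have hB : IsArcFromTo (δ '' Icc t₀ (dist ν y)) (δ t₀) y := by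
    simpa only [hδy] using hδ.isArcFromTo_image_Icc ht₀.2 (Icc_subset_Icc_left ht₀.1)
  have hBK : ∀ A ⊆ seg h x₁ x₂, A ∩ δ '' Icc t₀ (dist ν y) ⊆ {δ t₀} := by
    rintro A hA q ⟨hqA, t, ht, rfl⟩
    exact congrArg δ (hlast t ht (hA hqA))
  obtain ⟨γ, hγ, hγx₁, hγx₂, hseg⟩ := h.exists_isometricOn_seg x₁ x₂
  obtain ⟨w, hw, hγw⟩ : δ t₀ ∈ γ '' Icc 0 (dist x₁ x₂) := hseg ▸ hpK
  have hA₁ : IsArcFromTo (γ '' Icc 0 w) x₁ (δ t₀) :=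
    hγx₁ ▸ hγw ▸ hγ.isArcFromTo_image_Icc hw.1 (Icc_subset_Icc_right hw.2)
  have hA₂ : IsArcFromTo (γ '' Icc w (dist x₁ x₂)) x₂ (δ t₀) :=
    (hγx₂ ▸ hγw ▸ hγ.isArcFromTo_image_Icc hw.2 (Icc_subset_Icc_left hw.1)).symm
  refine ⟨δ t₀, hpK, hseg_νy ▸ mem_image_of_mem δ ht₀,
    h.mem_seg_of_isArcFromTo hA₁ hB (hBK _ ?_), h.mem_seg_of_isArcFromTo hA₂ hB (hBK _ ?_)⟩
  · exact hseg ▸ image_mono (Icc_subset_Icc_right hw.2)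
  · exact hseg ▸ image_mono (Icc_subset_Icc_left hw.1)

end IsRTree

theorem statement_4_general {M : Type*} [MetricSpace M] (h : IsRTree M)
    (s : ℝ) (x₁ x₂ ν : M)
    (hν : ν ∈ seg h x₁ x₂)
    (hν₁ : dist x₁ ν = s * dist x₁ x₂) (y : M) :
    dist ν y =
      max (max (dist x₁ y - s * dist x₁ x₂) (dist x₂ y - (1 - s) * dist x₁ x₂)) 0 := by
  obtain ⟨p, hp, hpν, hp₁, hp₂⟩ := h.exists_gate hν y
  have hpx₂ := h.dist_add_dist_of_mem_seg hp
  have hpy : 0 ≤ dist p y := dist_nonneg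
  rw [← h.dist_add_dist_of_mem_seg hpν, ← h.dist_add_dist_of_mem_seg hp₁,
    ← h.dist_add_dist_of_mem_seg hp₂, h.dist_eq_abs_sub_of_mem_seg hν hp, hν₁, dist_comm x₂ p]
  grind

/-- If `ν` is the point of `[x₁,x₂]` at distance `s·d(x₁,x₂)` from
`x₁` and `(1−s)·d(x₁,x₂)` from `x₂`, then for all `y`,
`d(ν,y) = max (d(x₁,y) ∸ s·d(x₁,x₂)) (d(x₂,y) ∸ (1−s)·d(x₁,x₂))`
(the maximum of the two truncated subtractions). -/
theorem statement_4 {M : Type*} [MetricSpace M] (h : IsRTree M)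
    (s : ℝ) (hs : s ∈ Set.Icc (0:ℝ) 1) (x₁ x₂ ν : M)
    (hν : ν ∈ seg h x₁ x₂)
    (hν₁ : dist x₁ ν = s * dist x₁ x₂)
    (hν₂ : dist x₂ ν = (1 - s) * dist x₁ x₂) (y : M) :
    dist ν y =
      max (max (dist x₁ y - s * dist x₁ x₂) (dist x₂ y - (1 - s) * dist x₁ x₂)) 0 :=
  statement_4_general h s x₁ x₂ ν hν hν₁ y
end
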